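/- arXiv:2402.13085 — 3 statements merged into one kernel-verified Lean document; each statement's English description precedes it below -/
import Mathlib

section
/- For every rational lasso expression ρ, the equation ρ = (∑_{a∈Σ} a·d₁(ρ,a)) + (∑_{a∈Σ} a·d₂(ρ,a))° holds in the lasso-language semantics: ⟦ρ⟧_∘ = ⋃_{a∈Σ} {a}·⟦d₁(ρ,a)⟧_∘ ∪ (⋃_{a∈Σ} {a}·⟦d₂(ρ,a)⟧)°. -/
/-- Rational expressions over alphabet `A`. -/
inductive RExp (A : Type) : Type
  | zero | one
  | char (a : A)
  | add (t r : RExp A)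
  | mul (t r : RExp A)
  | star (t : RExp A)

/-- Language semantics of rational expressions. -/
def RExp.lang {A : Type} : RExp A → Language A
  | .zero => 0
  | .one => 1
  | .char a => {[a]}
  | .add t r => t.lang + r.lang
  | .mul t r => t.lang * r.lang
  | .star t => KStar.kstar t.lang

/-- Empty word property, computed syntactically. -/
def RExp.eps {A : Type} : RExp A → Bool
  | .zero => false | .one => true | .char _ => false
  | .add t r => t.eps || r.eps
  | .mul t r => t.eps && r.eps
  | .star _ => true

/-- The Iverson bracket `[t ∈ N]` as a rational expression. -/
def RExp.epsExp {A : Type} (t : RExp A) : RExp A := if t.eps then .one else .zero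

/-- The Brzozowski derivative. -/
def RExp.deriv {A : Type} [DecidableEq A] : RExp A → A → RExp A
  | .zero, _ => .zero
  | .one, _ => .zero
  | .char b, a => if b = a then .one else .zero
  | .add t r, a => .add (t.deriv a) (r.deriv a)
  | .mul t r, a => .add (.mul (t.deriv a) r) (.mul t.epsExp (r.deriv a))
  | .star t, a => .mul (t.deriv a) (.star t)
/-- `U° = {(ε, u) | u ∈ U}`, as a lasso language (subset of Σ* × Σ⁺). -/
def circSet {A : Type} (U : Set (List A)) : Set (List A × List A) :=
  {p | p.1 = [] ∧ p.2 ∈ U ∧ p.2 ≠ []}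

/-- `U·K = {(uv, w) | u ∈ U, (v, w) ∈ K}`. -/
def lprod {A : Type} (U : Set (List A)) (K : Set (List A × List A)) :
    Set (List A × List A) :=
  {p | ∃ u v w, u ∈ U ∧ (v, w) ∈ K ∧ p = (u ++ v, w)}

/-- Rational lasso expressions: `ρ ::= 0 | t·ρ | ρ+ρ | r°`. -/
inductive LExp (A : Type) : Type
  | zero
  | scale (t : RExp A) (ρ : LExp A)
  | add (ρ σ : LExp A)
  | circ (r : RExp A)

/-- The side condition of the grammar: under each `(-)°` the expression
lacks the empty word property. -/
def LExp.WF {A : Type} : LExp A → Prop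
  | .zero => True
  | .scale _ ρ => ρ.WF
  | .add ρ σ => ρ.WF ∧ σ.WF
  | .circ r => [] ∉ r.lang

/-- Lasso-language semantics of rational lasso expressions. -/
def LExp.lsem {A : Type} : LExp A → Set (List A × List A)
  | .zero => ∅
  | .scale t ρ => lprod t.lang ρ.lsem
  | .add ρ σ => ρ.lsem ∪ σ.lsem
  | .circ r => circSet r.lang
/-- The spoke Brzozowski derivative `d₁`. -/
def LExp.d1 {A : Type} [DecidableEq A] : LExp A → A → LExp A
  | .zero, _ => .zero
  | .circ _, _ => .zero
  | .add ρ σ, a => .add (ρ.d1 a) (σ.d1 a)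
  | .scale r ρ, a => .add (.scale (r.deriv a) ρ) (.scale r.epsExp (ρ.d1 a))

/-- The switch Brzozowski derivative `d₂`. -/
def LExp.d2 {A : Type} [DecidableEq A] : LExp A → A → RExp A
  | .zero, _ => .zero
  | .circ t, a => t.deriv a
  | .add ρ σ, a => .add (ρ.d2 a) (σ.d2 a)
  | .scale r ρ, a => .mul r.epsExp (ρ.d2 a)

lemma Language.mem_singleton' {A : Type} (a x : List A) :
    x ∈ ({a} : Language A) ↔ x = a := Iff.rfl

lemma RExp.eps_iff {A : Type} (t : RExp A) : [] ∈ t.lang ↔ t.eps = true := by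
  induction t with
  | zero => simp [lang, eps]
  | one => simp [lang, eps, Language.mem_one]
  | char a => simp [lang, eps, Language.mem_singleton']
  | add t r ih1 ih2 => simp [lang, eps, Language.mem_add, ih1, ih2]
  | mul t r ih1 ih2 =>
      simp only [lang, eps, Language.mem_mul, Bool.and_eq_true, ← ih1, ← ih2]
      constructor
      · rintro ⟨a, ha, b, hb, hab⟩
        rcases List.append_eq_nil_iff.mp hab with ⟨rfl, rfl⟩
        exact ⟨ha, hb⟩
      · rintro ⟨h1, h2⟩; exact ⟨[], h1, [], h2, rfl⟩
  | star t ih => simp [lang, eps, Language.nil_mem_kstar]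

lemma RExp.epsExp_iff {A : Type} (t : RExp A) (w : List A) :
    w ∈ t.epsExp.lang ↔ (t.eps = true ∧ w = []) := by
  unfold epsExp
  by_cases h : t.eps <;> simp [h, lang, Language.mem_one]

lemma RExp.deriv_iff {A : Type} [DecidableEq A] (t : RExp A) (a : A) (w : List A) :
    (a :: w) ∈ t.lang ↔ w ∈ (t.deriv a).lang := by
  induction t generalizing w with
  | zero => simp [lang, deriv]
  | one => simp [lang, deriv, Language.mem_one]
  | char b =>
      by_cases h : b = a <;>
        simp [lang, deriv, h, Language.mem_one, Language.mem_singleton']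
      rintro rfl; simp at h
  | add t r ih1 ih2 => simp [lang, deriv, Language.mem_add, ih1, ih2]
  | mul t r ih1 ih2 =>
      simp only [lang, deriv, Language.mem_mul, Language.mem_add]
      constructor
      · rintro ⟨u, hu, v, hv, huv⟩
        cases u with
        | nil =>
            simp at huv; subst huv
            exact Or.inr ⟨[], (t.epsExp_iff []).2 ⟨(t.eps_iff).1 hu, rfl⟩, w, (ih2 w).1 hv, rfl⟩
        | cons b u' =>
            obtain ⟨rfl, rfl⟩ : b = a ∧ u' ++ v = w := by
              simpa using huv
            exact Or.inl ⟨u', (ih1 u').1 hu, v, hv, rfl⟩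
      · rintro (⟨u, hu, v, hv, rfl⟩ | ⟨u, hu, v, hv, rfl⟩)
        · exact ⟨a :: u, (ih1 u).2 hu, v, hv, rfl⟩
        · obtain ⟨he, rfl⟩ := (t.epsExp_iff u).1 hu
          exact ⟨[], (t.eps_iff).2 he, a :: v, (ih2 v).2 hv, rfl⟩
  | star t ih =>
      simp only [lang, deriv, Language.mem_mul]
      constructor
      · intro h
        rw [Language.mem_kstar_iff_exists_nonempty] at h
        obtain ⟨S, hS, hmem⟩ := h
        cases S with
        | nil => simp at hS
        | cons y S' =>
            cases y with
            | nil => exact absurd rfl (hmem [] (by simp)).2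
            | cons b y' =>
                obtain ⟨rfl, rfl⟩ : a = b ∧ w = y' ++ S'.flatten := by simpa using hS
                refine ⟨y', (ih y').1 (hmem _ (by simp)).1, S'.flatten, ?_, rfl⟩
                exact Language.join_mem_kstar (fun z hz => (hmem z (by simp [hz])).1)
      · rintro ⟨u, hu, v, hv, rfl⟩
        rw [Language.mem_kstar] at hv ⊢
        obtain ⟨L, rfl, hL⟩ := hv
        refine ⟨(a :: u) :: L, by simp, ?_⟩
        rintro y hy
        rcases List.mem_cons.mp hy with rfl | hy
        · exact (ih u).2 hu
        · exact hL y hy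

lemma LExp.lsem_iff {A : Type} [DecidableEq A] (ρ : LExp A) (h : ρ.WF) (x y : List A) :
    (x, y) ∈ ρ.lsem ↔
      (∃ a v, (v, y) ∈ ((ρ.d1 a).lsem) ∧ x = a :: v) ∨
        (x = [] ∧ ∃ a w, w ∈ ((ρ.d2 a).lang) ∧ y = a :: w) := by
  induction ρ generalizing x y with
  | zero => simp [lsem, d1, d2, RExp.lang]
  | circ r =>
      simp only [lsem, d1, d2, circSet, Set.mem_setOf_eq, Set.mem_empty_iff_false, false_and,
        exists_false, exists_const, false_or]
      constructor
      · rintro ⟨rfl, hy, hne⟩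
        cases y with
        | nil => exact absurd rfl hne
        | cons a w => exact ⟨rfl, a, w, (RExp.deriv_iff r a w).1 hy, rfl⟩
      · rintro ⟨rfl, a, w, hw, rfl⟩
        exact ⟨rfl, (RExp.deriv_iff r a w).2 hw, by simp⟩
  | add ρ σ ih1 ih2 =>
      obtain ⟨h1, h2⟩ := h
      simp only [lsem, d1, d2, Set.mem_union, ih1 h1, ih2 h2, RExp.lang, Language.mem_add]
      constructor
      · rintro ((⟨a, v, hv, rfl⟩ | ⟨rfl, a, w, hw, rfl⟩) | (⟨a, v, hv, rfl⟩ | ⟨rfl, a, w, hw, rfl⟩))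
        · exact Or.inl ⟨a, v, Or.inl hv, rfl⟩
        · exact Or.inr ⟨rfl, a, w, Or.inl hw, rfl⟩
        · exact Or.inl ⟨a, v, Or.inr hv, rfl⟩
        · exact Or.inr ⟨rfl, a, w, Or.inr hw, rfl⟩
      · rintro (⟨a, v, hv | hv, rfl⟩ | ⟨rfl, a, w, hw | hw, rfl⟩)
        · exact Or.inl (Or.inl ⟨a, v, hv, rfl⟩)
        · exact Or.inr (Or.inl ⟨a, v, hv, rfl⟩)
        · exact Or.inl (Or.inr ⟨rfl, a, w, hw, rfl⟩)
        · exact Or.inr (Or.inr ⟨rfl, a, w, hw, rfl⟩)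
  | scale r ρ ih =>
      simp only [LExp.WF] at h
      simp only [lsem, d1, d2, lprod, Set.mem_setOf_eq, Set.mem_union, RExp.lang,
        Language.mem_mul]
      constructor
      · rintro ⟨u, v, w, hu, hvw, heq⟩
        obtain ⟨rfl, rfl⟩ : x = u ++ v ∧ y = w := by simpa using heq
        cases u with
        | cons a u' =>
            refine Or.inl ⟨a, u' ++ v, Or.inl ⟨u', v, y, (RExp.deriv_iff r a u').1 hu, hvw, rfl⟩,
              rfl⟩
        | nil =>
            have he : r.eps = true := (r.eps_iff).1 hu
            rcases (ih h v y).1 hvw with ⟨a, v', hv', rfl⟩ | ⟨rfl, a, w', hw', rfl⟩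
            · exact Or.inl ⟨a, v', Or.inr ⟨[], v', y, (r.epsExp_iff []).2 ⟨he, rfl⟩, hv', rfl⟩,
                rfl⟩
            · exact Or.inr ⟨rfl, a, w', ⟨[], (r.epsExp_iff []).2 ⟨he, rfl⟩, w', hw', rfl⟩, rfl⟩
      · rintro (⟨a, v, ⟨u, v', w', hu, hv'w', heq⟩ | ⟨u, v', w', hu, hv'w', heq⟩, rfl⟩ |
          ⟨rfl, a, w, ⟨e, he, w', hw', hew⟩, rfl⟩)
        · obtain ⟨rfl, rfl⟩ : v = u ++ v' ∧ y = w' := by simpa using heq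
          exact ⟨a :: u, v', y, (RExp.deriv_iff r a u).2 hu, hv'w', by simp⟩
        · obtain ⟨rfl, rfl⟩ : v = u ++ v' ∧ y = w' := by simpa using heq
          obtain ⟨he, rfl⟩ := (r.epsExp_iff u).1 hu
          exact ⟨[], a :: v', y, (r.eps_iff).2 he,
            (ih h (a :: v') y).2 (Or.inl ⟨a, v', hv'w', rfl⟩), by simp⟩
        · obtain ⟨he2, rfl⟩ := (r.epsExp_iff e).1 he
          rw [List.nil_append] at hew
          exact ⟨[], [], a :: w, (r.eps_iff).2 he2,
            (ih h [] (a :: w)).2 (Or.inr ⟨rfl, a, w, hew ▸ hw', rfl⟩), by simp⟩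

lemma mem_circSet_iSup {A : Type} [Fintype A] (L : A → Language A) (p : List A × List A) :
    p ∈ circSet (⨆ a : A, ({[a]} : Language A) * L a) ↔
      p.1 = [] ∧ ∃ a w, w ∈ L a ∧ p.2 = a :: w := by
  have key : ∀ x : List A, x ∈ (⨆ a : A, ({[a]} : Language A) * L a : Set (List A)) ↔
      ∃ a, ∃ u ∈ ({[a]} : Language A), ∃ w ∈ L a, u ++ w = x := fun x =>
    Set.mem_iUnion.trans (exists_congr fun a => Language.mem_mul)
  simp only [circSet, Set.mem_setOf_eq, key, Set.iSup_eq_iUnion, Set.mem_iUnion,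
    Language.mem_mul, Language.mem_singleton']
  constructor
  · rintro ⟨h1, ⟨a, u, rfl, w, hw, hy⟩, hne⟩
    exact ⟨h1, a, w, hw, hy.symm⟩
  · rintro ⟨h1, a, w, hw, hy⟩
    exact ⟨h1, ⟨a, [a], rfl, w, hw, hy.symm⟩, by simp [hy]⟩

/-- Fundamental theorem for lasso expressions, at the level of lasso languages:
`⟦ρ⟧∘ = ⋃_a {a}·⟦d₁(ρ,a)⟧∘ ∪ (⋃_a {a}·⟦d₂(ρ,a)⟧)°`. -/
theorem fundamental_theorem_lasso (A : Type) [Fintype A] [DecidableEq A]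
    (ρ : LExp A) (hρ : ρ.WF) :
    ρ.lsem =
      (⋃ a : A, lprod {[a]} ((ρ.d1 a).lsem)) ∪
        circSet (⨆ a : A, ({[a]} : Language A) * ((ρ.d2 a).lang)) := by
  ext ⟨x, y⟩
  rw [LExp.lsem_iff ρ hρ x y]
  simp only [Set.mem_union, Set.mem_iUnion, lprod, Set.mem_setOf_eq, mem_circSet_iSup,
    Language.mem_singleton']
  constructor
  · rintro (⟨a, v, hv, rfl⟩ | ⟨rfl, a, w, hw, rfl⟩)
    · exact Or.inl ⟨a, [a], v, y, rfl, hv, by simp⟩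
    · exact Or.inr ⟨rfl, a, w, hw, rfl⟩
  · rintro (⟨a, u, v, w, rfl, hvw, heq⟩ | ⟨h1, a, w, hw, hy⟩)
    · obtain ⟨rfl, rfl⟩ : x = a :: v ∧ y = w := by simpa using heq
      exact Or.inl ⟨a, v, hvw, rfl⟩
    · exact Or.inr ⟨h1, a, w, hw, hy⟩
end

section
/- For every rational lasso expression ρ, the Brzozowski lasso automaton C = (Exp_∘, Exp, d₁, d₂, d, N) with initial state ρ accepts exactly the lasso language ⟦ρ⟧_∘: a lasso (u,v) is accepted (i.e., (d₂:d)(d₁(ρ,u),v) ∈ N, where d₂ is applied at the first letter of v and d thereafter) iff (u,v) ∈ ⟦ρ⟧_∘. -/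
lemma RExp.eps_correct {A : Type} (t : RExp A) : t.eps = true ↔ [] ∈ t.lang := by
  induction t with
  | zero => simp [RExp.eps, RExp.lang]
  | one => simp [RExp.eps, RExp.lang, Language.mem_one]
  | char a =>
      simp only [RExp.eps, RExp.lang, Bool.false_eq_true, false_iff]
      exact fun h => List.cons_ne_nil _ _ (Set.mem_singleton_iff.mp h).symm
  | add t r iht ihr =>
      simp [RExp.eps, RExp.lang, Language.mem_add, iht, ihr]
  | mul t r iht ihr =>
      simp only [RExp.eps, RExp.lang, Bool.and_eq_true, iht, ihr, Language.mem_mul]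
      constructor
      · rintro ⟨h1, h2⟩; exact ⟨[], h1, [], h2, rfl⟩
      · rintro ⟨a, ha, b, hb, hab⟩
        rcases List.append_eq_nil_iff.mp hab with ⟨rfl, rfl⟩
        exact ⟨ha, hb⟩
  | star t _ =>
      simp [RExp.eps, RExp.lang, Language.nil_mem_kstar]

lemma RExp.epsExp_lang {A : Type} (t : RExp A) (x : List A) :
    x ∈ t.epsExp.lang ↔ x = [] ∧ [] ∈ t.lang := by
  by_cases he : t.eps = true
  · simp [RExp.epsExp, he, RExp.lang, Language.mem_one, (RExp.eps_correct t).mp he]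
  · have : [] ∉ t.lang := fun h => he ((RExp.eps_correct t).mpr h)
    simp [RExp.epsExp, he, RExp.lang, this]

lemma RExp.deriv_correct {A : Type} [DecidableEq A] (t : RExp A) (a : A) (w : List A) :
    w ∈ (t.deriv a).lang ↔ a :: w ∈ t.lang := by
  induction t generalizing w with
  | zero => simp [RExp.deriv, RExp.lang]
  | one =>
      simp only [RExp.deriv, RExp.lang, Language.mem_one]
      constructor
      · intro h; exact absurd h (Language.notMem_zero _)
      · intro h; exact absurd h (List.cons_ne_nil _ _)
  | char b =>
      by_cases h : b = a
      · subst h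
        simp only [RExp.deriv, if_pos rfl, RExp.lang, Language.mem_one]
        constructor
        · rintro rfl; rfl
        · intro hm
          have h' : b :: w = [b] := hm
          injection h' with _ h2
      · simp only [RExp.deriv, if_neg h, RExp.lang, Set.mem_singleton_iff]
        constructor
        · intro hw; exact absurd hw (Language.notMem_zero _)
        · intro hw; exact absurd (by injection hw with h1 _; exact h1.symm) h
  | add t r iht ihr =>
      simp [RExp.deriv, RExp.lang, Language.mem_add, iht, ihr]
  | mul t r iht ihr =>
      simp only [RExp.deriv, RExp.lang, Language.mem_add, Language.mem_mul]
      constructor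
      · rintro (⟨x, hx, y, hy, rfl⟩ | ⟨x, hx, y, hy, rfl⟩)
        · exact ⟨a :: x, (iht x).mp hx, y, hy, rfl⟩
        · obtain ⟨rfl, hε⟩ := (RExp.epsExp_lang t x).mp hx
          exact ⟨[], hε, a :: y, (ihr y).mp hy, rfl⟩
      · rintro ⟨x, hx, y, hy, hxy⟩
        cases x with
        | nil =>
            right
            refine ⟨[], (RExp.epsExp_lang t []).mpr ⟨rfl, hx⟩, w, ?_, rfl⟩
            simp only [List.nil_append] at hxy
            exact (ihr w).mpr (hxy ▸ hy)
        | cons b x' =>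
            left
            simp only [List.cons_append, List.cons.injEq] at hxy
            obtain ⟨rfl, rfl⟩ := hxy
            exact ⟨x', (iht x').mpr hx, y, hy, rfl⟩
  | star t iht =>
      simp only [RExp.deriv, RExp.lang, Language.mem_mul]
      constructor
      · rintro ⟨x, hx, y, hy, rfl⟩
        have h1 : (a :: x) ++ y ∈ t.lang * (KStar.kstar t.lang) :=
          ⟨a :: x, (iht x).mp hx, y, hy, rfl⟩
        have h2 : t.lang * (KStar.kstar t.lang) ≤ KStar.kstar t.lang := by
          nth_rewrite 2 [← Language.one_add_self_mul_kstar_eq_kstar (l := t.lang)]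
          intro z hz; exact Or.inr hz
        exact h2 h1
      · intro h
        rw [Language.mem_kstar] at h
        obtain ⟨L, hL, hmem⟩ := h
        induction L generalizing w with
        | nil => simp at hL
        | cons b L' ihL =>
            cases b with
            | nil =>
                simp only [List.flatten_cons, List.nil_append] at hL
                exact ihL w hL (fun y hy => hmem y (List.mem_cons_of_mem _ hy))
            | cons c b' =>
                simp only [List.flatten_cons, List.cons_append, List.cons.injEq] at hL
                obtain ⟨rfl, rfl⟩ : c = a ∧ w = b' ++ L'.flatten :=
                  ⟨hL.1.symm, hL.2⟩
                refine ⟨b', (iht b').mpr (hmem _ List.mem_cons_self),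
                  L'.flatten, ?_, rfl⟩
                exact Language.join_mem_kstar (fun y hy => hmem y (List.mem_cons_of_mem _ hy))

lemma RExp.foldl_deriv_correct {A : Type} [DecidableEq A] (w : List A) (t : RExp A) :
    (List.foldl RExp.deriv t w).eps = true ↔ w ∈ t.lang := by
  induction w generalizing t with
  | nil => simpa using RExp.eps_correct t
  | cons a w ih =>
      simp only [List.foldl_cons]
      rw [ih, RExp.deriv_correct]

lemma mem_lprod {A : Type} {U : Language A} {K : Set (List A × List A)}
    {u v : List A} :
    (u, v) ∈ lprod U K ↔ ∃ x y, x ++ y = u ∧ x ∈ U ∧ (y, v) ∈ K := by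
  constructor
  · rintro ⟨x, y, w, hx, hyw, heq⟩
    injection heq with h1 h2
    exact ⟨x, y, h1.symm, hx, h2 ▸ hyw⟩
  · rintro ⟨x, y, rfl, hx, hy⟩
    exact ⟨x, y, v, hx, hy, rfl⟩

lemma LExp.snd_ne_nil {A : Type} (ρ : LExp A) (u : List A) :
    (u, ([] : List A)) ∉ ρ.lsem := by
  induction ρ generalizing u with
  | zero => simp [LExp.lsem]
  | scale t ρ ih =>
      intro h
      obtain ⟨x, y, _, _, hy⟩ := mem_lprod.mp h
      exact ih y hy
  | add ρ σ ihρ ihσ =>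
      rintro (h | h)
      · exact ihρ u h
      · exact ihσ u h
  | circ r =>
      rintro ⟨_, _, h⟩
      exact h rfl

lemma LExp.d2_correct {A : Type} [DecidableEq A] (ρ : LExp A) (a : A) (w : List A) :
    w ∈ (ρ.d2 a).lang ↔ (([] : List A), a :: w) ∈ ρ.lsem := by
  induction ρ with
  | zero =>
      simp only [LExp.d2, LExp.lsem, RExp.lang, Set.mem_empty_iff_false, iff_false]
      exact Language.notMem_zero _
  | scale t ρ ih =>
      show _ ↔ (_, _) ∈ lprod _ _
      simp only [LExp.d2, RExp.lang, Language.mem_mul, mem_lprod]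
      constructor
      · rintro ⟨x, hx, y, hy, rfl⟩
        obtain ⟨rfl, hε⟩ := (RExp.epsExp_lang t x).mp hx
        exact ⟨[], [], rfl, hε, ih.mp hy⟩
      · rintro ⟨x, y, hxy, hx, hy⟩
        rcases List.append_eq_nil_iff.mp hxy with ⟨rfl, rfl⟩
        exact ⟨[], (RExp.epsExp_lang t []).mpr ⟨rfl, hx⟩, w, ih.mpr hy, rfl⟩
  | add ρ σ ihρ ihσ =>
      simp [LExp.d2, RExp.lang, Language.mem_add, LExp.lsem, ihρ, ihσ]
  | circ r =>
      simp [LExp.d2, LExp.lsem, circSet, RExp.deriv_correct]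
      exact Iff.rfl

lemma LExp.d1_correct {A : Type} [DecidableEq A] (ρ : LExp A) (a : A) (u v : List A) :
    (a :: u, v) ∈ ρ.lsem ↔ (u, v) ∈ (ρ.d1 a).lsem := by
  induction ρ generalizing u with
  | zero => simp [LExp.d1, LExp.lsem]
  | scale t ρ ih =>
      show (_, _) ∈ lprod _ _ ↔ _
      simp only [LExp.d1, LExp.lsem, Set.mem_union, mem_lprod]
      constructor
      · rintro ⟨x, y, hxy, hx, hy⟩
        cases x with
        | nil =>
            right
            simp only [List.nil_append] at hxy
            subst hxy
            exact ⟨[], u, rfl, (RExp.epsExp_lang t []).mpr ⟨rfl, hx⟩, (ih u).mp hy⟩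
        | cons b x' =>
            left
            simp only [List.cons_append, List.cons.injEq] at hxy
            obtain ⟨rfl, rfl⟩ := hxy
            exact ⟨x', y, rfl, (RExp.deriv_correct _ _ _).mpr hx, hy⟩
      · rintro (⟨x, y, rfl, hx, hy⟩ | ⟨x, y, rfl, hx, hy⟩)
        · exact ⟨a :: x, y, rfl, (RExp.deriv_correct t a x).mp hx, hy⟩
        · obtain ⟨rfl, hε⟩ := (RExp.epsExp_lang t x).mp hx
          exact ⟨[], a :: y, rfl, hε, (ih y).mpr hy⟩
  | add ρ σ ihρ ihσ =>
      simp only [LExp.d1, LExp.lsem, Set.mem_union, ihρ, ihσ]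
  | circ r =>
      simp [LExp.d1, LExp.lsem, circSet]

/-- The Brzozowski lasso automaton with initial state `ρ` accepts exactly
`⟦ρ⟧∘`: the spoke is read via `d₁`, the first letter of the loop via `d₂`,
the rest of the loop via the ordinary derivative `d`, and a lasso is accepted
iff the resulting rational expression has the empty word property. -/
theorem brzozowski_lasso_automaton_accepts (A : Type) [Fintype A] [DecidableEq A]
    (ρ : LExp A) (hρ : ρ.WF) (u v : List A) :
    (u, v) ∈ ρ.lsem ↔
      ∃ (a : A) (w : List A), v = a :: w ∧
        (List.foldl RExp.deriv (LExp.d2 (List.foldl LExp.d1 ρ u) a) w).eps = true := by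
  clear hρ
  induction u generalizing ρ with
  | nil =>
      simp only [List.foldl_nil]
      cases v with
      | nil =>
          constructor
          · intro h; exact absurd h (LExp.snd_ne_nil ρ [])
          · rintro ⟨a, w, h, _⟩; cases h
      | cons a w =>
          constructor
          · intro h
            exact ⟨a, w, rfl, (RExp.foldl_deriv_correct w _).mpr
              ((LExp.d2_correct ρ a w).mpr h)⟩
          · rintro ⟨b, w', h, he⟩
            obtain ⟨rfl, rfl⟩ : b = a ∧ w' = w := by
              injection h with h1 h2; exact ⟨h1.symm, h2.symm⟩
            exact (LExp.d2_correct ρ _ _).mp ((RExp.foldl_deriv_correct _ _).mp he)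
  | cons b u ih =>
      rw [LExp.d1_correct ρ b u v, List.foldl_cons]
      exact ih (ρ.d1 b)
end

section
/- For every rational ω-expression T, the rational lasso expression h(T) weakly represents T: the image under φ of the lasso language ⟦h(T)⟧_∘ equals the set of ultimately periodic words in ⟦T⟧_ω, i.e., {u v^ω | (u,v) ∈ ⟦h(T)⟧_∘} = UP(⟦T⟧_ω). -/
/-- The sequential splitting relation `∇`, as a finite list of splits. -/
def nabla {A : Type} : RExp A → List (RExp A × RExp A)
  | .zero => []
  | .one => [(.one, .one)]
  | .char a => [(.one, .char a), (.char a, .one)]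
  | .add t r => nabla t ++ nabla r
  | .mul t r => (nabla t).map (fun p => (p.1, .mul p.2 r)) ++
      (nabla r).map (fun p => (.mul t p.1, p.2))
  | .star t => (nabla t).map (fun p => (.mul (.star t) p.1, .mul p.2 (.star t))) ++
      [(.one, .one), (.mul (.star t) t, .one)]
/-- `l` is a prefix of the infinite word `w`. -/
def IsWordPrefix {A : Type} (l : List A) (w : ℕ → A) : Prop :=
  ∀ i (h : i < l.length), l.get ⟨i, h⟩ = w i

/-- `w` is the infinite concatenation `u · f 0 · f 1 · ⋯`. -/
def OmegaCat {A : Type} (u : List A) (f : ℕ → List A) (w : ℕ → A) : Prop :=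
  ∀ n, IsWordPrefix (u ++ ((List.range n).map f).flatten) w

/-- Prepending a finite word to an infinite word. -/
def catWord {A : Type} (u : List A) (w : ℕ → A) : ℕ → A := fun n =>
  if h : n < u.length then u.get ⟨n, h⟩ else w (n - u.length)

/-- The infinite word `u v^ω` (as a function ℕ → Σ), for `v ≠ []`. -/
def uvOmega {A : Type} [Inhabited A] (u v : List A) : ℕ → A := fun n =>
  if h : n < u.length then u.get ⟨n, h⟩
  else v.getD ((n - u.length) % v.length) default

/-- Rational ω-expressions: `T ::= 0 | T+T | t·T | r^ω`. -/
inductive OExp (A : Type) : Type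
  | zero
  | add (T₁ T₂ : OExp A)
  | scale (t : RExp A) (T : OExp A)
  | omega (r : RExp A)

/-- ω-language semantics of rational ω-expressions (infinite words as
functions ℕ → Σ). -/
def OExp.osem {A : Type} : OExp A → Set (ℕ → A)
  | .zero => ∅
  | .add T₁ T₂ => T₁.osem ∪ T₂.osem
  | .scale t T => {w | ∃ u ∈ t.lang, ∃ w' ∈ T.osem, w = catWord u w'}
  | .omega r => {w | ∃ f : ℕ → List A, (∀ i, f i ∈ r.lang ∧ f i ≠ []) ∧ OmegaCat [] f w}

/-- The grammar side condition: `ε ∉ ⟦r⟧` under each `(-)^ω`. -/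
def OExp.OWF {A : Type} : OExp A → Prop
  | .zero => True
  | .add T₁ T₂ => T₁.OWF ∧ T₂.OWF
  | .scale _ T => T.OWF
  | .omega r => [] ∉ r.lang

/-- Finite sums of rational lasso expressions. -/
def sumL {A : Type} (l : List (LExp A)) : LExp A := l.foldr .add .zero

/-- The map `h` from rational ω-expressions to rational lasso expressions:
`h(t^ω) = ∑_{(t₀,t₁)∈∇_t} (t*·t₀)·(t₁·t*·t₀)°`. -/
def hmap {A : Type} : OExp A → LExp A
  | .zero => .zero
  | .add T₁ T₂ => .add (hmap T₁) (hmap T₂)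
  | .scale t T => .scale t (hmap T)
  | .omega r => sumL ((nabla r).map (fun p =>
      .scale (.mul (.star r) p.1) (.circ (.mul p.2 (.mul (.star r) p.1)))))
section Nabla
variable {A : Type}

theorem flatten_mem_kstar {l : Language A} {L : List (List A)} (h : ∀ x ∈ L, x ∈ l) :
    L.flatten ∈ KStar.kstar l :=
  Language.mem_kstar.2 ⟨L, rfl, h⟩

theorem nabla_sound : ∀ (t : RExp A) (p : RExp A × RExp A), p ∈ nabla t →
    ∀ u v : List A, u ∈ p.1.lang → v ∈ p.2.lang → u ++ v ∈ t.lang := by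
  intro t
  induction t with
  | zero => intro p hp; simp [nabla] at hp
  | one =>
    intro p hp u v hu hv
    simp [nabla] at hp; subst hp
    simp [RExp.lang, Language.mem_one] at hu hv ⊢
    simp [hu, hv]
  | char a =>
    intro p hp u v hu hv
    simp [nabla] at hp
    rcases hp with hp | hp <;> subst hp <;>
      simp [RExp.lang, Language.mem_one] at hu hv ⊢ <;> simp [hu, hv]
  | add t r iht ihr =>
    intro p hp u v hu hv
    simp only [nabla, List.mem_append] at hp
    rcases hp with hp | hp
    · exact Or.inl (iht p hp u v hu hv)
    · exact Or.inr (ihr p hp u v hu hv)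
  | mul t r iht ihr =>
    intro p hp u v hu hv
    simp only [nabla, List.mem_append, List.mem_map] at hp
    rcases hp with ⟨q, hq, rfl⟩ | ⟨q, hq, rfl⟩
    · rcases Language.mem_mul.1 hv with ⟨b, hb, c, hc, rfl⟩
      exact Language.mem_mul.2 ⟨u ++ b, iht q hq u b hu hb, c, hc, by simp⟩
    · rcases Language.mem_mul.1 hu with ⟨a, ha, b, hb, rfl⟩
      exact Language.mem_mul.2 ⟨a, ha, b ++ v, ihr q hq b v hb hv, by simp⟩
  | star t iht =>
    intro p hp u v hu hv
    simp only [nabla, List.mem_append, List.mem_map, List.mem_cons,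
      List.not_mem_nil, or_false] at hp
    rcases hp with ⟨q, hq, rfl⟩ | hp | hp
    · rcases Language.mem_mul.1 hu with ⟨g, hg, a, ha, rfl⟩
      rcases Language.mem_mul.1 hv with ⟨b, hb, g', hg', rfl⟩
      rcases Language.mem_kstar.1 hg with ⟨Lg, rfl, hLg⟩
      rcases Language.mem_kstar.1 hg' with ⟨Lg', rfl, hLg'⟩
      have : (Lg ++ [a ++ b] ++ Lg').flatten ∈ KStar.kstar t.lang := by
        refine flatten_mem_kstar ?_
        intro x hx
        simp only [List.mem_append, List.mem_singleton] at hx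
        rcases hx with (hx | rfl) | hx
        · exact hLg x hx
        · exact iht q hq a b ha hb
        · exact hLg' x hx
      simpa [List.flatten_append, RExp.lang] using this
    · subst hp
      simp only [RExp.lang, Language.mem_one] at hu hv
      subst hu; subst hv
      exact flatten_mem_kstar (L := []) (by simp)
    · subst hp
      simp only [RExp.lang, Language.mem_one] at hv
      subst hv
      rcases Language.mem_mul.1 hu with ⟨g, hg, a, ha, rfl⟩
      rcases Language.mem_kstar.1 hg with ⟨Lg, rfl, hLg⟩
      have : (Lg ++ [a]).flatten ∈ KStar.kstar t.lang := by
        refine flatten_mem_kstar ?_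
        intro x hx
        simp only [List.mem_append, List.mem_singleton] at hx
        rcases hx with hx | rfl
        · exact hLg x hx
        · exact ha
      simpa [List.flatten_append, RExp.lang] using this

theorem flatten_split : ∀ (L : List (List A)) (u v : List A),
    u ++ v = L.flatten → v ≠ [] →
    ∃ L1 m L2 w1 w2, L = L1 ++ m :: L2 ∧ m = w1 ++ w2 ∧
      u = L1.flatten ++ w1 ∧ v = w2 ++ L2.flatten := by
  intro L
  induction L with
  | nil =>
    intro u v h hv
    simp only [List.flatten_nil, List.append_eq_nil_iff] at h
    exact absurd h.2 hv
  | cons m L ih =>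
    intro u v h hv
    simp only [List.flatten_cons] at h
    rcases List.append_eq_append_iff.1 h with ⟨a, hm, hv'⟩ | ⟨c, hu, hL⟩
    · exact ⟨[], m, L, u, a, by simp, hm, by simp, hv'⟩
    · rcases ih c v hL.symm hv with ⟨L1, m', L2, w1, w2, hL1, hm', hc, hv'⟩
      exact ⟨m :: L1, m', L2, w1, w2, by simp [hL1], hm',
        by simp [hu, hc], hv'⟩

theorem nabla_complete : ∀ (t : RExp A) (u v : List A), u ++ v ∈ t.lang →
    ∃ p ∈ nabla t, u ∈ p.1.lang ∧ v ∈ p.2.lang := by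
  intro t
  induction t with
  | zero => intro u v h; simp [RExp.lang] at h
  | one =>
    intro u v h
    simp only [RExp.lang, Language.mem_one, List.append_eq_nil_iff] at h
    exact ⟨(.one, .one), by simp [nabla], by simp [RExp.lang, h.1, Language.mem_one],
      by simp [RExp.lang, h.2, Language.mem_one]⟩
  | char a =>
    intro u v h
    simp only [RExp.lang, Set.mem_singleton_iff] at h
    rcases List.append_eq_cons_iff.1 h with ⟨hu, hv⟩ | ⟨u', hu, hv⟩
    · subst hu; subst hv
      exact ⟨(.one, .char a), by simp [nabla],
        by simp [RExp.lang, Language.mem_one], rfl⟩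
    · obtain ⟨h1, h2⟩ := List.append_eq_nil_iff.1 hv.symm
      subst h1; subst h2; subst hu
      exact ⟨(.char a, .one), by simp [nabla], rfl,
        by simp [RExp.lang, Language.mem_one]⟩
  | add t r iht ihr =>
    intro u v h
    rcases h with h | h
    · rcases iht u v h with ⟨p, hp, h1, h2⟩
      exact ⟨p, by simp [nabla, hp], h1, h2⟩
    · rcases ihr u v h with ⟨p, hp, h1, h2⟩
      exact ⟨p, by simp [nabla, hp], h1, h2⟩
  | mul t r iht ihr =>
    intro u v h
    rcases Language.mem_mul.1 h with ⟨x, hx, y, hy, hxy⟩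
    rcases List.append_eq_append_iff.1 hxy.symm with ⟨a, hxa, hya⟩ | ⟨c, huc, hyc⟩
    · -- x = u ++ a, v = a ++ y
      rcases iht u a (hxa ▸ hx) with ⟨p, hp, h1, h2⟩
      refine ⟨(p.1, .mul p.2 r), ?_, h1, ?_⟩
      · simp only [nabla, List.mem_append, List.mem_map]
        exact Or.inl ⟨p, hp, rfl⟩
      · exact Language.mem_mul.2 ⟨a, h2, y, hy, hya.symm⟩
    · -- u = x ++ c, y = c ++ v
      rcases ihr c v (hyc ▸ hy) with ⟨p, hp, h1, h2⟩
      refine ⟨(.mul t p.1, p.2), ?_, ?_, h2⟩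
      · simp only [nabla, List.mem_append, List.mem_map]
        exact Or.inr ⟨p, hp, rfl⟩
      · exact Language.mem_mul.2 ⟨x, hx, c, h1, huc.symm⟩
  | star t iht =>
    intro u v h
    rcases Language.mem_kstar.1 h with ⟨L, hL, hLmem⟩
    by_cases hv : v = []
    · subst hv
      by_cases hu : u = []
      · subst hu
        exact ⟨(.one, .one), by simp [nabla], by simp [RExp.lang, Language.mem_one],
          by simp [RExp.lang, Language.mem_one]⟩
      · have hLne : L ≠ [] := by
          rintro rfl; simp at hL; exact hu (by simpa using hL)
        rcases List.eq_nil_or_concat L with rfl | ⟨L', m, rfl⟩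
        · exact absurd rfl hLne
        · refine ⟨(.mul (.star t) t, .one), by simp [nabla], ?_,
            by simp [RExp.lang, Language.mem_one]⟩
          refine Language.mem_mul.2 ⟨L'.flatten, ?_, m, ?_, ?_⟩
          · exact flatten_mem_kstar fun x hx => hLmem x (by simp [hx])
          · exact hLmem m (by simp)
          · simpa [List.flatten_append] using hL.symm
    · rcases flatten_split L u v (by simpa using hL) hv with
        ⟨L1, m, L2, w1, w2, hLeq, hm, hu, hv'⟩
      rcases iht w1 w2 (hm ▸ hLmem m (by simp [hLeq])) with ⟨p, hp, h1, h2⟩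
      refine ⟨(.mul (.star t) p.1, .mul p.2 (.star t)), ?_, ?_, ?_⟩
      · simp only [nabla, List.mem_append, List.mem_map]
        exact Or.inl ⟨p, hp, rfl⟩
      · refine Language.mem_mul.2 ⟨L1.flatten, ?_, w1, h1, hu.symm⟩
        exact flatten_mem_kstar fun x hx => hLmem x (by simp [hLeq, hx])
      · refine Language.mem_mul.2 ⟨w2, h2, L2.flatten, ?_, hv'.symm⟩
        exact flatten_mem_kstar fun x hx => hLmem x (by simp [hLeq, hx])

end Nabla
set_option linter.unusedSectionVars false
section Words
variable {A : Type} [Inhabited A]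

theorem length_flatten_replicate {α : Type} (k : ℕ) (v : List α) :
    ((List.replicate k v).flatten).length = k * v.length := by
  induction k with
  | zero => simp
  | succ k ih =>
    rw [List.replicate_succ, List.flatten_cons, List.length_append, ih]
    ring

theorem getD_flatten_replicate {α : Type} (d : α) : ∀ (k : ℕ) (v : List α) (j : ℕ),
    j < k * v.length →
    ((List.replicate k v).flatten).getD j d = v.getD (j % v.length) d := by
  intro k
  induction k with
  | zero => intro v j h; simp at h
  | succ k ih =>
    intro v j h
    rw [List.replicate_succ, List.flatten_cons]
    by_cases hj : j < v.length
    · rw [List.getD_append _ _ _ _ hj, Nat.mod_eq_of_lt hj]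
    · push_neg at hj
      rw [List.getD_append_right _ _ _ _ hj,
        ih v (j - v.length) (by rw [Nat.succ_mul] at h; omega)]
      congr 1
      conv_rhs => rw [← Nat.sub_add_cancel hj, Nat.add_mod_right]

theorem flatten_prefix {α : Type} {l l' : List (List α)} (h : l <+: l') :
    l.flatten <+: l'.flatten := by
  obtain ⟨t, rfl⟩ := h
  exact ⟨t.flatten, (List.flatten_append).symm⟩

theorem flatten_flatten_replicate {α : Type} (n : ℕ) (M : List (List α)) :
    ((List.replicate n M).flatten).flatten = (List.replicate n M.flatten).flatten := by
  induction n with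
  | zero => simp
  | succ n ih => simp [List.replicate_succ, List.flatten_cons, ih]

theorem isWordPrefix_mono {l l' : List A} {w : ℕ → A} (h : IsWordPrefix l w)
    (hp : l' <+: l) : IsWordPrefix l' w := by
  intro i hi
  have hi' : i < l.length := lt_of_lt_of_le hi hp.length_le
  have h2 := h i hi'
  rw [List.get_eq_getElem] at h2 ⊢
  rw [hp.getElem hi, h2]

theorem isWordPrefix_getElem {l : List A} {w : ℕ → A} (h : IsWordPrefix l w)
    {i : ℕ} (hi : i < l.length) : l[i] = w i := by
  simpa [List.get_eq_getElem] using h i hi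

theorem isWordPrefix_eq {l l' : List A} {w : ℕ → A} (h : IsWordPrefix l w)
    (h' : IsWordPrefix l' w) (hl : l.length = l'.length) : l = l' := by
  apply List.ext_getElem hl
  intro n h1 h2
  rw [isWordPrefix_getElem h h1, isWordPrefix_getElem h' h2]

theorem uvOmega_pos {u v : List A} {n : ℕ} (h : n < u.length) :
    uvOmega u v n = u[n] := by
  simp [uvOmega, h, List.get_eq_getElem]

theorem uvOmega_neg {u v : List A} {n : ℕ} (h : ¬ n < u.length) :
    uvOmega u v n = v.getD ((n - u.length) % v.length) default := by
  simp [uvOmega, h]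

theorem uvOmega_append_period (u v : List A) (hv : v ≠ []) :
    uvOmega (u ++ v) v = uvOmega u v := by
  have hv' : 0 < v.length := List.length_pos_iff.2 hv
  funext n
  by_cases h1 : n < u.length
  · rw [uvOmega_pos (by simp only [List.length_append]; omega), uvOmega_pos h1,
      List.getElem_append_left h1]
  · by_cases h2 : n < u.length + v.length
    · rw [uvOmega_pos (by simp only [List.length_append]; omega), uvOmega_neg h1,
        List.getElem_append_right (by omega),
        Nat.mod_eq_of_lt (by omega), List.getD_eq_getElem _ _ (by omega)]
    · rw [uvOmega_neg (by simp only [List.length_append]; omega), uvOmega_neg h1]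
      congr 1
      rw [List.length_append,
        show n - u.length = (n - (u.length + v.length)) + v.length by omega,
        Nat.add_mod_right]

theorem uvOmega_append_reps (u v : List A) (hv : v ≠ []) (k : ℕ) :
    uvOmega (u ++ (List.replicate k v).flatten) v = uvOmega u v := by
  induction k generalizing u with
  | zero => simp
  | succ k ih =>
    rw [List.replicate_succ, List.flatten_cons, ← List.append_assoc, ih (u ++ v),
      uvOmega_append_period u v hv]

theorem isWordPrefix_self (u v : List A) : IsWordPrefix u (uvOmega u v) := by
  intro i h
  rw [List.get_eq_getElem, (uvOmega_pos h :)]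

theorem isWordPrefix_reps (u v : List A) (hv : v ≠ []) (k : ℕ) :
    IsWordPrefix (u ++ (List.replicate k v).flatten) (uvOmega u v) := by
  rw [← uvOmega_append_reps u v hv k]
  exact isWordPrefix_self _ _

theorem uvOmega_flatten_rep (u v : List A) (hv : v ≠ []) {m : ℕ} (hm : 0 < m) :
    uvOmega u ((List.replicate m v).flatten) = uvOmega u v := by
  have hv' : 0 < v.length := List.length_pos_iff.2 hv
  funext n
  by_cases h : n < u.length
  · rw [uvOmega_pos h, uvOmega_pos h]
  · rw [uvOmega_neg h, uvOmega_neg h, length_flatten_replicate]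
    have hpos : 0 < m * v.length := by positivity
    rw [getD_flatten_replicate _ m v _ (Nat.mod_lt _ hpos),
      Nat.mod_mod_of_dvd _ ⟨m, by ring⟩]

theorem rotate_getD (x y : List A) (d : A) (j : ℕ) (hs : 0 < x.length + y.length) :
    (x ++ y).getD ((j + x.length) % (x.length + y.length)) d
      = (y ++ x).getD (j % (y.length + x.length)) d := by
  have h1 : j % (y.length + x.length) = j % (x.length + y.length) := by
    rw [Nat.add_comm y.length x.length]
  rw [h1]
  set s := x.length + y.length with hsdef
  set i := j % s with hidef
  have hj : i < s := Nat.mod_lt _ hs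
  have key : (j + x.length) % s = (i + x.length) % s := by
    conv_lhs => rw [Nat.add_mod]
    conv_rhs => rw [Nat.add_mod]
    rw [hidef, Nat.mod_mod_of_dvd _ (dvd_refl s)]
  rw [key]
  by_cases hy : i < y.length
  · rw [Nat.mod_eq_of_lt (by omega), List.getD_append_right _ _ _ _ (by omega),
      Nat.add_sub_cancel, List.getD_append _ _ _ _ hy]
  · have h2 : (i + x.length) % s = i - y.length := by
      rw [Nat.mod_eq_sub_mod (by omega), Nat.mod_eq_of_lt (by omega)]
      omega
    rw [h2, List.getD_append _ _ _ _ (by omega),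
      List.getD_append_right _ _ _ _ (by omega)]

theorem uvOmega_rotate (u x y : List A) (hs : 0 < x.length + y.length) :
    uvOmega u (x ++ y) = uvOmega (u ++ x) (y ++ x) := by
  funext n
  by_cases h1 : n < u.length
  · rw [uvOmega_pos h1, uvOmega_pos (by simp only [List.length_append]; omega)]
    exact (List.getElem_append_left h1).symm
  · by_cases h2 : n < u.length + x.length
    · rw [uvOmega_neg h1, uvOmega_pos (by simp only [List.length_append]; omega),
        List.getElem_append_right (by omega),
        Nat.mod_eq_of_lt (by simp only [List.length_append]; omega),
        List.getD_eq_getElem _ _ (by simp only [List.length_append]; omega),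
        List.getElem_append_left (by omega)]
    · rw [uvOmega_neg h1, uvOmega_neg (by simp only [List.length_append]; omega)]
      simp only [List.length_append]
      conv_lhs => rw [show n - u.length = (n - u.length - x.length) + x.length by omega]
      conv_rhs => rw [show n - (u.length + x.length) = n - u.length - x.length by omega]
      exact rotate_getD x y default _ (by omega)

theorem uvOmega_drop (u v : List A) (k : ℕ) (hk : k ≤ u.length) (n : ℕ) :
    uvOmega u v (k + n) = uvOmega (u.drop k) v n := by
  by_cases h : k + n < u.length
  · rw [uvOmega_pos h, uvOmega_pos (by rw [List.length_drop]; omega),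
      List.getElem_drop]
  · rw [uvOmega_neg h, uvOmega_neg (by rw [List.length_drop]; omega)]
    congr 2
    rw [List.length_drop]
    omega

theorem uvOmega_shift (u v : List A) (hv : v ≠ []) (k : ℕ) :
    ∃ u', ∀ n, uvOmega u v (k + n) = uvOmega u' v n := by
  have hv' : 0 < v.length := List.length_pos_iff.2 hv
  have hk : k ≤ (u ++ (List.replicate k v).flatten).length := by
    rw [List.length_append, length_flatten_replicate]
    have : k ≤ k * v.length := Nat.le_mul_of_pos_right k hv'
    omega
  refine ⟨(u ++ (List.replicate k v).flatten).drop k, fun n => ?_⟩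
  rw [← uvOmega_append_reps u v hv k, uvOmega_drop _ v k hk n]

theorem catWord_pos {u : List A} {w : ℕ → A} {n : ℕ} (h : n < u.length) :
    catWord u w n = u[n] := by
  simp [catWord, h, List.get_eq_getElem]

theorem catWord_neg {u : List A} {w : ℕ → A} {n : ℕ} (h : ¬ n < u.length) :
    catWord u w n = w (n - u.length) := by
  simp [catWord, h]

theorem catWord_shift (u : List A) (w : ℕ → A) (n : ℕ) :
    catWord u w (u.length + n) = w n := by
  rw [catWord_neg (by omega)]
  congr 1
  omega

theorem uvOmega_cat (a b c : List A) :
    uvOmega (a ++ b) c = catWord a (uvOmega b c) := by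
  funext n
  by_cases h1 : n < a.length
  · rw [catWord_pos h1, uvOmega_pos (by simp only [List.length_append]; omega),
      List.getElem_append_left h1]
  · rw [catWord_neg h1]
    by_cases h2 : n < a.length + b.length
    · rw [uvOmega_pos (by simp only [List.length_append]; omega),
        uvOmega_pos (by omega), List.getElem_append_right (by omega)]
    · rw [uvOmega_neg (by simp only [List.length_append]; omega),
        uvOmega_neg (by omega)]
      have : n - (a ++ b).length = n - a.length - b.length := by
        rw [List.length_append]; omega
      rw [this]

end Words
section Lsem
variable {A : Type}

theorem sumL_lsem (l : List (LExp A)) (p : List A × List A) :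
    p ∈ (sumL l).lsem ↔ ∃ ρ ∈ l, p ∈ ρ.lsem := by
  induction l with
  | nil => simp [sumL, LExp.lsem]
  | cons x l ih =>
    show p ∈ (LExp.add x (sumL l)).lsem ↔ _
    simp only [LExp.lsem, Set.mem_union, ih, List.mem_cons]
    constructor
    · rintro (h | ⟨ρ, hρ, h⟩)
      exacts [⟨x, Or.inl rfl, h⟩, ⟨ρ, Or.inr hρ, h⟩]
    · rintro ⟨ρ, (rfl | hρ), h⟩
      exacts [Or.inl h, Or.inr ⟨ρ, hρ, h⟩]

theorem mem_hmap_omega (r : RExp A) (u v : List A) :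
    (u, v) ∈ (hmap (OExp.omega r)).lsem ↔
      ∃ p ∈ nabla r, u ∈ (RExp.mul (.star r) p.1).lang ∧
        v ∈ (RExp.mul p.2 (.mul (.star r) p.1)).lang ∧ v ≠ [] := by
  show (u, v) ∈ (sumL _).lsem ↔ _
  rw [sumL_lsem]
  constructor
  · rintro ⟨ρ, hρ, hmem⟩
    rcases List.mem_map.1 hρ with ⟨p, hp, rfl⟩
    rcases hmem with ⟨a, v', w, ha, ⟨hnil, hw, hwne⟩, heq⟩
    rw [Prod.mk.injEq] at heq
    obtain ⟨hu, hv⟩ := heq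
    subst hnil
    rw [List.append_nil] at hu
    subst hu; subst hv
    exact ⟨p, hp, ha, hw, hwne⟩
  · rintro ⟨p, hp, hu, hv, hvne⟩
    refine ⟨_, List.mem_map.2 ⟨p, hp, rfl⟩, u, [], v, hu, ⟨rfl, hv, hvne⟩, by simp⟩

theorem uvOmega_mem_osem_omega [Inhabited A] {r : RExp A} (hr : [] ∉ r.lang)
    (L M : List (List A)) (hL : ∀ x ∈ L, x ∈ r.lang) (hM : ∀ x ∈ M, x ∈ r.lang)
    (hM0 : M ≠ []) :
    uvOmega L.flatten M.flatten ∈ (OExp.omega r).osem := by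
  have hMlen : 0 < M.length := List.length_pos_iff.2 hM0
  have hMfne : M.flatten ≠ [] := by
    intro h
    rcases M with _ | ⟨m, M⟩
    · exact hM0 rfl
    · have hm := List.flatten_eq_nil_iff.1 h m (by simp)
      exact hr (hm ▸ hM m (by simp))
  refine ⟨fun i => if h : i < L.length then L[i]
      else M.getD ((i - L.length) % M.length) [], fun i => ?_, ?_⟩
  · by_cases h : i < L.length
    · simp only [dif_pos h]
      have hmem := hL L[i] (List.getElem_mem h)
      exact ⟨hmem, fun hnil => hr (hnil ▸ hmem)⟩
    · simp only [dif_neg h]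
      have hlt : (i - L.length) % M.length < M.length := Nat.mod_lt _ hMlen
      rw [List.getD_eq_getElem _ _ hlt]
      have hmem := hM _ (List.getElem_mem hlt)
      exact ⟨hmem, fun hnil => hr (hnil ▸ hmem)⟩
  · intro n
    rw [List.nil_append]
    have hkey : (List.range n).map (fun i => if h : i < L.length then L[i]
        else M.getD ((i - L.length) % M.length) [])
        = (L ++ (List.replicate n M).flatten).take n := by
      apply List.ext_getElem
      · rw [List.length_map, List.length_range, List.length_take, List.length_append,
          length_flatten_replicate]
        have : n ≤ n * M.length := Nat.le_mul_of_pos_right n hMlen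
        omega
      · intro i h1 h2
        rw [List.length_map, List.length_range] at h1
        rw [List.getElem_map, List.getElem_range, List.getElem_take]
        by_cases h : i < L.length
        · rw [List.getElem_append_left h, dif_pos h]
        · have hb : i - L.length < n * M.length := by
            have : n ≤ n * M.length := Nat.le_mul_of_pos_right n hMlen
            omega
          rw [dif_neg h, List.getElem_append_right (by omega),
            ← List.getD_eq_getElem _ ([] : List A)
              (by rw [length_flatten_replicate]; exact hb),
            getD_flatten_replicate ([] : List A) n M _ hb]
    rw [hkey]
    apply isWordPrefix_mono (isWordPrefix_reps L.flatten M.flatten hMfne n)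
    have heq : (L ++ (List.replicate n M).flatten).flatten
        = L.flatten ++ (List.replicate n M.flatten).flatten := by
      rw [List.flatten_append, flatten_flatten_replicate]
    exact heq ▸ flatten_prefix (List.take_prefix n _)

theorem lsem_omega_sub [Inhabited A] {r : RExp A} (hr : [] ∉ r.lang) {u v : List A}
    (h : (u, v) ∈ (hmap (OExp.omega r)).lsem) :
    uvOmega u v ∈ (OExp.omega r).osem ∧ v ≠ [] := by
  rcases (mem_hmap_omega r u v).1 h with ⟨p, hp, hu, hv, hvne⟩
  refine ⟨?_, hvne⟩
  rcases Language.mem_mul.1 hu with ⟨g, hg, a, ha, rfl⟩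
  rcases Language.mem_mul.1 hv with ⟨b, hb, c, hc, rfl⟩
  rcases Language.mem_mul.1 hc with ⟨g', hg', a', ha', rfl⟩
  rcases Language.mem_kstar.1 hg with ⟨Lg, rfl, hLg⟩
  rcases Language.mem_kstar.1 hg' with ⟨Lg', rfl, hLg'⟩
  have hlen : 0 < b.length + (Lg'.flatten ++ a').length := by
    have := List.length_pos_iff.2 hvne
    rw [List.length_append] at this
    omega
  have hrot := uvOmega_rotate (Lg.flatten ++ a) b (Lg'.flatten ++ a') hlen
  have hLflat : (Lg ++ [a ++ b]).flatten = (Lg.flatten ++ a) ++ b := by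
    rw [List.flatten_append]; simp [List.append_assoc]
  have hMflat : (Lg' ++ [a' ++ b]).flatten = (Lg'.flatten ++ a') ++ b := by
    rw [List.flatten_append]; simp [List.append_assoc]
  rw [hrot, ← hLflat, ← hMflat]
  apply uvOmega_mem_osem_omega hr
  · intro x hx
    rcases List.mem_append.1 hx with hx | hx
    · exact hLg x hx
    · rw [List.mem_singleton.1 hx]
      exact nabla_sound r p hp a b ha hb
  · intro x hx
    rcases List.mem_append.1 hx with hx | hx
    · exact hLg' x hx
    · rw [List.mem_singleton.1 hx]
      exact nabla_sound r p hp a' b ha' hb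
  · simp

end Lsem
section Hard
variable {A : Type}

def psum (f : ℕ → List A) : ℕ → ℕ := fun n => (((List.range n).map f).flatten).length

theorem psum_succ (f : ℕ → List A) (n : ℕ) :
    psum f (n + 1) = psum f n + (f n).length := by
  simp [psum, List.range_succ]

theorem psum_mono (f : ℕ → List A) (hf : ∀ i, f i ≠ []) : StrictMono (psum f) :=
  strictMono_nat_of_lt_succ fun n => by
    have := List.length_pos_iff.2 (hf n)
    rw [psum_succ]; omega

def nkf (f : ℕ → List A) (q : ℕ) : ℕ := Nat.findGreatest (fun n => psum f n ≤ q) q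

theorem nkf_le (f : ℕ → List A) (q : ℕ) : psum f (nkf f q) ≤ q :=
  Nat.findGreatest_spec (P := fun n => psum f n ≤ q) (m := 0) (n := q)
    (Nat.zero_le q) (by simp [psum])

theorem nkf_lt (f : ℕ → List A) (hf : ∀ i, f i ≠ []) (q : ℕ) :
    q < psum f (nkf f q + 1) := by
  by_cases h : nkf f q + 1 ≤ q
  · have h3 := Nat.findGreatest_is_greatest (P := fun n => psum f n ≤ q)
      (k := nkf f q + 1) (by unfold nkf; omega) h
    omega
  · have := (psum_mono f hf).le_apply (x := nkf f q + 1)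
    omega

theorem nkf_mono (f : ℕ → List A) {q q' : ℕ} (h : q ≤ q') : nkf f q ≤ nkf f q' :=
  Nat.le_findGreatest (le_trans (Nat.findGreatest_le q) h) (le_trans (nkf_le f q) h)

theorem block_decomp [Inhabited A] (u v : List A) (hv : v ≠ [])
    (f : ℕ → List A) (hcat : OmegaCat [] f (uvOmega u v)) (j n : ℕ)
    (h1 : psum f n ≤ u.length + j * v.length)
    (h2 : u.length + j * v.length < psum f (n + 1)) :
    u ++ (List.replicate j v).flatten = ((List.range n).map f).flatten
      ++ (f n).take (u.length + j * v.length - psum f n) := by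
  apply isWordPrefix_eq (isWordPrefix_reps u v hv j)
  · have hpre := hcat (n + 1)
    rw [List.nil_append] at hpre
    apply isWordPrefix_mono hpre
    rw [List.range_succ, List.map_append, List.flatten_append]
    simp only [List.map_cons, List.map_nil, List.flatten_cons, List.flatten_nil,
      List.append_nil]
    rw [List.prefix_append_right_inj]
    exact List.take_prefix _ _
  · have hpn : psum f n = (((List.range n).map f).flatten).length := rfl
    have hps := psum_succ f n
    rw [List.length_append, List.length_append, length_flatten_replicate,
      List.length_take]
    omega

theorem osem_omega_to_lsem [Inhabited A] {r : RExp A} (hr : [] ∉ r.lang)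
    (u v : List A) (hv : v ≠ []) (f : ℕ → List A)
    (hf : ∀ i, f i ∈ r.lang ∧ f i ≠ []) (hcat : OmegaCat [] f (uvOmega u v)) :
    ∃ x y : List A, (x, y) ∈ (hmap (OExp.omega r)).lsem ∧
      uvOmega u v = uvOmega x y := by
  classical
  have hfne : ∀ i, f i ≠ [] := fun i => (hf i).2
  have hvl : 0 < v.length := List.length_pos_iff.2 hv
  -- split each period-aligned cut point inside its block, choose a nabla pair
  have hch : ∀ k : ℕ, ∃ pp ∈ nabla r,
      (f (nkf f (u.length + k * v.length))).take
        (u.length + k * v.length - psum f (nkf f (u.length + k * v.length)))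
        ∈ pp.1.lang ∧
      (f (nkf f (u.length + k * v.length))).drop
        (u.length + k * v.length - psum f (nkf f (u.length + k * v.length)))
        ∈ pp.2.lang := by
    intro k
    apply nabla_complete
    rw [List.take_append_drop]
    exact (hf _).1
  choose g hg1 hg2 hg3 using hch
  haveI : Finite {x // x ∈ nabla r} := (List.finite_toSet (nabla r)).to_subtype
  obtain ⟨c, hc⟩ := Finite.exists_infinite_fiber
    fun k : ℕ => (⟨g k, hg1 k⟩ : {x // x ∈ nabla r})
  have hS : {k : ℕ | g k = c.1}.Infinite := by
    apply (Set.infinite_coe_iff.1 hc).mono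
    intro k hk
    have : (⟨g k, hg1 k⟩ : {x // x ∈ nabla r}) = c := hk
    exact congrArg Subtype.val this
  obtain ⟨k, hk⟩ := hS.nonempty
  -- pick l in the fiber with a strictly larger block index
  obtain ⟨l, hlS, hlgt⟩ :=
    hS.exists_gt (psum f (nkf f (u.length + k * v.length) + 1))
  have hN12 : nkf f (u.length + k * v.length) < nkf f (u.length + l * v.length) := by
    have h1 : nkf f (u.length + k * v.length) + 1
        ≤ nkf f (u.length + l * v.length) := by
      apply Nat.le_findGreatest
      · have := (psum_mono f hfne).le_apply (x := nkf f (u.length + k * v.length) + 1)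
        have h2 : l ≤ l * v.length := Nat.le_mul_of_pos_right l hvl
        omega
      · show psum f (nkf f (u.length + k * v.length) + 1) ≤ u.length + l * v.length
        have h2 : l ≤ l * v.length := Nat.le_mul_of_pos_right l hvl
        omega
    omega
  have hkl : k < l := by
    by_contra h
    push_neg at h
    have : nkf f (u.length + l * v.length) ≤ nkf f (u.length + k * v.length) :=
      nkf_mono f (by have := Nat.mul_le_mul_right v.length h; omega)
    omega
  -- instantiate the facts we need, then abbreviate
  have hA1 := nkf_le f (u.length + k * v.length)
  have hA2 := nkf_lt f hfne (u.length + k * v.length)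
  have hB1 := nkf_le f (u.length + l * v.length)
  have hB2 := nkf_lt f hfne (u.length + l * v.length)
  have e1 := block_decomp u v hv f hcat k _ hA1 hA2
  have e2 := block_decomp u v hv f hcat l _ hB1 hB2
  have hgk2 := hg2 k
  have hgk3 := hg3 k
  have hgl2 := hg2 l
  rw [hk] at hgk2 hgk3
  rw [hlS] at hgl2
  set N1 := nkf f (u.length + k * v.length) with hN1def
  set N2 := nkf f (u.length + l * v.length) with hN2def
  set ak := (f N1).take (u.length + k * v.length - psum f N1) with hakdef
  set bk := (f N1).drop (u.length + k * v.length - psum f N1) with hbkdef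
  set al := (f N2).take (u.length + l * v.length - psum f N2) with haldef
  set mid := ((List.range (N2 - (N1 + 1))).map fun i => f (N1 + 1 + i)).flatten
    with hmiddef
  have hfN1 : ak ++ bk = f N1 := by
    rw [hakdef, hbkdef]; exact List.take_append_drop _ _
  -- split the long block list
  have hsplit : ((List.range N2).map f).flatten
      = ((List.range N1).map f).flatten ++ (ak ++ (bk ++ mid)) := by
    conv_lhs => rw [show N2 = (N1 + 1) + (N2 - (N1 + 1)) by omega]
    rw [List.range_add, List.map_append, List.flatten_append, List.range_succ,
      List.map_append, List.flatten_append, List.map_map, hmiddef]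
    simp only [List.map_cons, List.map_nil, List.flatten_cons, List.flatten_nil,
      List.append_nil, Function.comp_def]
    rw [← hfN1]
    simp [List.append_assoc]
  have e3 : u ++ (List.replicate l v).flatten
      = (u ++ (List.replicate k v).flatten) ++ (List.replicate (l - k) v).flatten := by
    rw [List.append_assoc, ← List.flatten_append, ← List.replicate_add,
      show k + (l - k) = l by omega]
  have echain : (((List.range N1).map f).flatten ++ ak)
        ++ (List.replicate (l - k) v).flatten
      = (((List.range N1).map f).flatten ++ ak) ++ (bk ++ (mid ++ al)) := by
    calc (((List.range N1).map f).flatten ++ ak)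
          ++ (List.replicate (l - k) v).flatten
        = (u ++ (List.replicate k v).flatten)
          ++ (List.replicate (l - k) v).flatten := by rw [← e1]
      _ = u ++ (List.replicate l v).flatten := e3.symm
      _ = ((List.range N2).map f).flatten ++ al := e2
      _ = (((List.range N1).map f).flatten ++ ak) ++ (bk ++ (mid ++ al)) := by
          rw [hsplit]; simp [List.append_assoc]
  have ey : (List.replicate (l - k) v).flatten = bk ++ (mid ++ al) :=
    List.append_cancel_left echain
  have hyne : bk ++ (mid ++ al) ≠ [] := by
    rw [← ey]
    intro hnil
    have hlen := congrArg List.length hnil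
    rw [length_flatten_replicate] at hlen
    rcases (by simpa using hlen : l - k = 0 ∨ v = []) with h | h
    · omega
    · exact hv h
  -- memberships
  have hxmem : ((List.range N1).map f).flatten ++ ak
      ∈ (RExp.mul (.star r) c.1.1).lang := by
    refine Language.mem_mul.2 ⟨_, flatten_mem_kstar ?_, ak, hgk2, rfl⟩
    intro x hx
    rcases List.mem_map.1 hx with ⟨i, _, rfl⟩
    exact (hf i).1
  have hymem : bk ++ (mid ++ al)
      ∈ (RExp.mul c.1.2 (.mul (.star r) c.1.1)).lang := by
    refine Language.mem_mul.2 ⟨bk, hgk3, mid ++ al, ?_, rfl⟩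
    refine Language.mem_mul.2 ⟨mid, flatten_mem_kstar ?_, al, hgl2, rfl⟩
    intro x hx
    rcases List.mem_map.1 hx with ⟨i, _, rfl⟩
    exact (hf _).1
  refine ⟨((List.range N1).map f).flatten ++ ak, bk ++ (mid ++ al),
    (mem_hmap_omega r _ _).2 ⟨c.1, c.2, hxmem, hymem, hyne⟩, ?_⟩
  -- the word equality
  rw [← uvOmega_append_reps u v hv k,
    ← uvOmega_flatten_rep (u ++ (List.replicate k v).flatten) v hv
      (m := l - k) (by omega),
    e1, ey]

end Hard
/-- `h(T)` weakly represents `T`: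
`{u v^ω | (u,v) ∈ ⟦h(T)⟧∘} = UP(⟦T⟧_ω)`. -/
theorem hmap_weakly_represents (A : Type) [Fintype A] [Inhabited A]
    (T : OExp A) (hT : T.OWF) :
    {w | ∃ u v : List A, (u, v) ∈ (hmap T).lsem ∧ w = uvOmega u v} =
      T.osem ∩ {w | ∃ u v : List A, v ≠ [] ∧ w = uvOmega u v} := by
  induction T with
  | zero =>
    ext w
    simp [hmap, LExp.lsem, OExp.osem]
  | add T1 T2 ih1 ih2 =>
    obtain ⟨h1, h2⟩ := hT
    have hL : {w | ∃ u v : List A, (u, v) ∈ (hmap (OExp.add T1 T2)).lsem ∧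
          w = uvOmega u v}
        = {w | ∃ u v : List A, (u, v) ∈ (hmap T1).lsem ∧ w = uvOmega u v}
          ∪ {w | ∃ u v : List A, (u, v) ∈ (hmap T2).lsem ∧ w = uvOmega u v} := by
      ext w
      simp only [Set.mem_union, Set.mem_setOf_eq]
      constructor
      · rintro ⟨u, v, (hm | hm), rfl⟩
        exacts [Or.inl ⟨u, v, hm, rfl⟩, Or.inr ⟨u, v, hm, rfl⟩]
      · rintro (⟨u, v, hm, rfl⟩ | ⟨u, v, hm, rfl⟩)
        exacts [⟨u, v, Or.inl hm, rfl⟩, ⟨u, v, Or.inr hm, rfl⟩]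
    rw [hL, ih1 h1, ih2 h2]
    show _ = (T1.osem ∪ T2.osem) ∩ _
    rw [Set.union_inter_distrib_right]
  | scale t T ih =>
    have e := ih hT
    ext w
    simp only [Set.mem_setOf_eq, Set.mem_inter_iff]
    constructor
    · rintro ⟨u, v, hm, rfl⟩
      obtain ⟨a, b, v', ha, hbv, heq⟩ := hm
      rw [Prod.mk.injEq] at heq
      obtain ⟨rfl, rfl⟩ := heq
      have hw' : uvOmega b v ∈ T.osem ∩
          {w | ∃ u v : List A, v ≠ [] ∧ w = uvOmega u v} := by
        rw [← e]; exact ⟨b, v, hbv, rfl⟩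
      obtain ⟨hos, u2, v2, hv2, hw2⟩ := hw'
      constructor
      · exact ⟨a, ha, uvOmega b v, hos, uvOmega_cat a b v⟩
      · refine ⟨a ++ u2, v2, hv2, ?_⟩
        rw [uvOmega_cat a b v, hw2, ← uvOmega_cat]
    · rintro ⟨⟨a, ha, w', hw', rfl⟩, U, V, hV, hUV⟩
      obtain ⟨u', hu'⟩ := uvOmega_shift U V hV a.length
      have hw'eq : w' = uvOmega u' V := by
        funext n
        rw [← hu' n, ← hUV, catWord_shift]
      have hmem : w' ∈ T.osem ∩
          {w | ∃ u v : List A, v ≠ [] ∧ w = uvOmega u v} :=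
        ⟨hw', u', V, hV, hw'eq⟩
      rw [← e] at hmem
      obtain ⟨b, c, hbc, hwbc⟩ := hmem
      refine ⟨a ++ b, c, ⟨a, b, c, ha, hbc, rfl⟩, ?_⟩
      rw [uvOmega_cat a b c, ← hwbc]
  | omega r =>
    ext w
    simp only [Set.mem_setOf_eq, Set.mem_inter_iff]
    constructor
    · rintro ⟨u, v, hm, rfl⟩
      obtain ⟨hos, hvne⟩ := lsem_omega_sub hT hm
      exact ⟨hos, u, v, hvne, rfl⟩
    · rintro ⟨⟨f, hf, hcat⟩, U, V, hV, rfl⟩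
      exact osem_omega_to_lsem hT U V hV f hf hcat
end
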